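/- arXiv:1209.5564 — 4 statements merged into one kernel-verified Lean document; each statement's English description precedes it below -/
import Mathlib

section
/- Let ι be a finite nonempty index type and a : ι → ℝ with a(e) > 0 for all e. Then there exists a constant C > 0 such that for every family u : ι → ℝ → ℂ of functions, each continuously differentiable on [0, a(e)], and for every e ∈ ι and every x ∈ [0, a(e)]: |u(e)(x)|² ≤ C · (Σ_{e'∈ι} ∫₀^{a(e')} |u(e')(s)|² ds)^{1/2} · (Σ_{e'∈ι} ∫₀^{a(e')} (|u(e')(s)|² + |u(e')'(s)|²) ds)^{1/2}. (Gagliardo–Nirenberg-type estimate on a finite metric graph: ‖u‖²_{L^∞(ℰ)} ≤ C ‖u‖_{L²(ℰ)} ‖u‖_{H¹(ℰ)}.) -/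
/-!
On an edge `[a, b]` the function `‖f‖²` has derivative `2 ⟪f, f'⟫`, so at any `x` it exceeds its
value at a point where it equals its mean by at most `∫ |2 ⟪f, f'⟫| ≤ 2 ‖f‖₂ ‖f'‖₂`; the
Cauchy–Schwarz step comes from integrating `2 |f| |f'| ≤ t |f|² + t⁻¹ |f'|²` and optimising in `t`.
On the graph, `‖u e‖₂ ≤ ‖u‖_{L²} ≤ ‖u‖_{H¹}` and `‖u' e‖₂ ≤ ‖u‖_{H¹}`, which gives the estimate
with `C = ∑ e, 1 / a e + 2`.
-/

open Set MeasureTheory intervalIntegral Filter Topology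

lemma two_mul_mul_le_mul_sq_add_inv_mul_sq (x y : ℝ) {t : ℝ} (ht : 0 < t) :
    2 * (x * y) ≤ t * x ^ 2 + t⁻¹ * y ^ 2 := by
  have h : t * x ^ 2 + t⁻¹ * y ^ 2 - 2 * (x * y) = (t * x - y) ^ 2 / t := by
    field_simp; ring
  nlinarith [div_nonneg (sq_nonneg (t * x - y)) ht.le]

lemma le_two_mul_sqrt_mul_sqrt_of_forall_pos {X a b : ℝ}
    (h : ∀ t > 0, X ≤ t * a + t⁻¹ * b) : X ≤ 2 * (√a * √b) := by
  -- `t = √b / √a` is optimal; shifting both roots by `δ` keeps `t` defined when `a` or `b` is `0`.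
  have h_shift : ∀ δ > 0, X ≤ 2 * ((√a + δ) * (√b + δ)) := by
    intro δ hδ
    set p := √a + δ
    set q := √b + δ
    have hp : 0 < p := by positivity
    have hq : 0 < q := by positivity
    have hap : a ≤ p ^ 2 := (Real.sqrt_le_left hp.le).mp (by linarith)
    have hbq : b ≤ q ^ 2 := (Real.sqrt_le_left hq.le).mp (by linarith)
    calc X ≤ q / p * a + (q / p)⁻¹ * b := h _ (by positivity)
      _ ≤ q / p * p ^ 2 + p / q * q ^ 2 := by rw [inv_div]; gcongr
      _ = 2 * (p * q) := by field_simp; ring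
  have hlim : Tendsto (fun δ => 2 * ((√a + δ) * (√b + δ))) (𝓝[>] 0) (𝓝 (2 * (√a * √b))) := by
    refine (Continuous.tendsto' ?_ 0 _ (by simp)).mono_left nhdsWithin_le_nhds
    fun_prop
  exact ge_of_tendsto hlim (eventually_nhdsWithin_of_forall h_shift)

section

variable {E : Type*} [NormedAddCommGroup E] [NormedSpace ℝ E] [CompleteSpace E]

lemma norm_sub_le_integral_norm_deriv {g g' : ℝ → E} {a b : ℝ}
    (hg : ∀ x ∈ Icc a b, HasDerivWithinAt g (g' x) (Icc a b) x)
    (hg' : IntervalIntegrable g' volume a b) {x y : ℝ} (hx : x ∈ Icc a b) (hy : y ∈ Icc a b) :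
    ‖g x - g y‖ ≤ ∫ s in a..b, ‖g' s‖ := by
  wlog hyx : y ≤ x generalizing x y
  · rw [norm_sub_rev]; exact this hy hx (le_of_not_ge hyx)
  have hsub : Icc y x ⊆ Icc a b := Icc_subset_Icc hy.1 hx.2
  have hftc : ∫ s in y..x, g' s = g x - g y := by
    refine integral_eq_sub_of_hasDerivAt_of_le hyx
      (fun s hs => (hg s (hsub hs)).continuousWithinAt.mono hsub) (fun s hs => ?_)
      (hg'.mono_set (by rwa [uIcc_of_le hyx, uIcc_of_le (hx.1.trans hx.2)]))
    exact (hg s (hsub (Ioo_subset_Icc_self hs))).hasDerivAt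
      (Icc_mem_nhds (hy.1.trans_lt hs.1) (hs.2.trans_le hx.2))
  calc ‖g x - g y‖ = ‖∫ s in y..x, g' s‖ := by rw [hftc]
    _ ≤ ∫ s in y..x, ‖g' s‖ := norm_integral_le_integral_norm hyx
    _ ≤ ∫ s in a..b, ‖g' s‖ :=
      integral_mono_interval hy.1 hyx hx.2 (Eventually.of_forall fun _ => norm_nonneg _) hg'.norm

end

section

variable {F : Type*} [NormedAddCommGroup F] [InnerProductSpace ℝ F]

lemma integral_norm_inner_le_two_mul_sqrt_mul_sqrt {f f' : ℝ → F} {a b : ℝ} (hab : a ≤ b)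
    (hf : ContinuousOn f (Icc a b)) (hf' : ContinuousOn f' (Icc a b)) :
    ∫ s in a..b, ‖2 * inner ℝ (f s) (f' s)‖ ≤
      2 * (√(∫ s in a..b, ‖f s‖ ^ 2) * √(∫ s in a..b, ‖f' s‖ ^ 2)) := by
  have hI : IntervalIntegrable (fun s => ‖f s‖ ^ 2) volume a b :=
    (hf.norm.pow 2).intervalIntegrable_of_Icc hab
  have hJ : IntervalIntegrable (fun s => ‖f' s‖ ^ 2) volume a b :=
    (hf'.norm.pow 2).intervalIntegrable_of_Icc hab
  refine le_two_mul_sqrt_mul_sqrt_of_forall_pos fun t ht => ?_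
  rw [← intervalIntegral.integral_const_mul, ← intervalIntegral.integral_const_mul,
    ← integral_add (hI.const_mul t) (hJ.const_mul _)]
  refine integral_mono_on hab
    ((continuousOn_const.mul (hf.inner hf')).norm.intervalIntegrable_of_Icc hab)
    ((hI.const_mul t).add (hJ.const_mul _)) fun s _ => ?_
  rw [norm_mul, Real.norm_two, Real.norm_eq_abs]
  calc 2 * |inner ℝ (f s) (f' s)| ≤ 2 * (‖f s‖ * ‖f' s‖) := by
        gcongr; exact abs_real_inner_le_norm _ _
    _ ≤ _ := two_mul_mul_le_mul_sq_add_inv_mul_sq _ _ ht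

theorem norm_sq_le_integral_div_add_two_mul_sqrt_mul_sqrt {f f' : ℝ → F} {a b : ℝ} (hab : a < b)
    (hf : ∀ x ∈ Icc a b, HasDerivWithinAt f (f' x) (Icc a b) x)
    (hf' : ContinuousOn f' (Icc a b)) {x : ℝ} (hx : x ∈ Icc a b) :
    ‖f x‖ ^ 2 ≤ (∫ s in a..b, ‖f s‖ ^ 2) / (b - a) +
      2 * (√(∫ s in a..b, ‖f s‖ ^ 2) * √(∫ s in a..b, ‖f' s‖ ^ 2)) := by
  have hfc : ContinuousOn f (Icc a b) := fun s hs => (hf s hs).continuousWithinAt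
  obtain ⟨y, hy, hy_avg⟩ := exists_eq_interval_average (f := fun s => ‖f s‖ ^ 2) hab.ne
    (by rw [uIcc_of_le hab.le]; exact hfc.norm.pow 2)
  rw [interval_average_eq_div] at hy_avg
  have hy' : y ∈ Icc a b := by
    rw [uIoo_of_le hab.le] at hy; exact Ioo_subset_Icc_self hy
  have hosc := norm_sub_le_integral_norm_deriv (fun s hs => (hf s hs).norm_sq)
    ((continuousOn_const.mul (hfc.inner hf')).intervalIntegrable_of_Icc hab.le) hx hy'
  have hCS := integral_norm_inner_le_two_mul_sqrt_mul_sqrt hab.le hfc hf'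
  rw [← hy_avg]
  linarith [le_abs_self (‖f x‖ ^ 2 - ‖f y‖ ^ 2), Real.norm_eq_abs (‖f x‖ ^ 2 - ‖f y‖ ^ 2)]

end

theorem stmt_2_general (ι : Type*) [Fintype ι] (a : ι → ℝ) (ha : ∀ e, 0 < a e) :
    ∃ C > (0:ℝ), ∀ (u u' : ι → ℝ → ℂ),
      (∀ e, ∀ x ∈ Set.Icc (0:ℝ) (a e), HasDerivWithinAt (u e) (u' e x) (Set.Icc (0:ℝ) (a e)) x) →
      (∀ e, ContinuousOn (u' e) (Set.Icc (0:ℝ) (a e))) →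
      ∀ e, ∀ x ∈ Set.Icc (0:ℝ) (a e),
        ‖u e x‖ ^ 2 ≤ C * Real.sqrt (∑ e', ∫ s in (0:ℝ)..(a e'), ‖u e' s‖ ^ 2) *
          Real.sqrt (∑ e', ∫ s in (0:ℝ)..(a e'), (‖u e' s‖ ^ 2 + ‖u' e' s‖ ^ 2)) := by
  have hinv : ∀ e, 0 ≤ (a e)⁻¹ := fun e => (inv_pos.2 (ha e)).le
  refine ⟨∑ e, (a e)⁻¹ + 2, add_pos_of_nonneg_of_pos (Finset.sum_nonneg fun e _ => hinv e) two_pos,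
    fun u u' hu hu' e x hx => ?_⟩
  set I := fun e' => ∫ s in (0:ℝ)..(a e'), ‖u e' s‖ ^ 2
  set J := fun e' => ∫ s in (0:ℝ)..(a e'), ‖u' e' s‖ ^ 2
  have hI : ∀ e', 0 ≤ I e' := fun e' => integral_nonneg (ha e').le fun _ _ => by positivity
  have hJ : ∀ e', 0 ≤ J e' := fun e' => integral_nonneg (ha e').le fun _ _ => by positivity
  have hK : ∀ e', ∫ s in (0:ℝ)..(a e'), (‖u e' s‖ ^ 2 + ‖u' e' s‖ ^ 2) = I e' + J e' := fun e' =>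
    integral_add
      ((ContinuousOn.norm fun s hs => (hu e' s hs).continuousWithinAt).pow 2
        |>.intervalIntegrable_of_Icc (ha e').le)
      (((hu' e').norm.pow 2).intervalIntegrable_of_Icc (ha e').le)
  simp only [hK, Finset.sum_add_distrib]
  set L := ∑ e', I e'
  set M := ∑ e', J e'
  have hIL : I e ≤ L := Finset.single_le_sum (fun e' _ => hI e') (Finset.mem_univ e)
  have hJM : J e ≤ M := Finset.single_le_sum (fun e' _ => hJ e') (Finset.mem_univ e)
  have hM : 0 ≤ M := Finset.sum_nonneg fun e' _ => hJ e'
  have hIe : I e ≤ √L * √(L + M) := calc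
    I e ≤ √L * √L := by rw [Real.mul_self_sqrt ((hI e).trans hIL)]; exact hIL
    _ ≤ √L * √(L + M) := by gcongr; linarith
  have hsum_inv : (a e)⁻¹ ≤ ∑ e', (a e')⁻¹ :=
    Finset.single_le_sum (fun e' _ => hinv e') (Finset.mem_univ e)
  calc ‖u e x‖ ^ 2 ≤ I e / a e + 2 * (√(I e) * √(J e)) := by
        simpa using norm_sq_le_integral_div_add_two_mul_sqrt_mul_sqrt (ha e) (hu e) (hu' e) hx
    _ ≤ (a e)⁻¹ * (√L * √(L + M)) + 2 * (√L * √(L + M)) := by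
        rw [div_eq_inv_mul]
        gcongr
        · exact hinv e
        · linarith [hI e]
    _ ≤ (∑ e', (a e')⁻¹) * (√L * √(L + M)) + 2 * (√L * √(L + M)) := by gcongr
    _ = _ := by ring

/-- Gagliardo–Nirenberg-type estimate on a finite metric graph:
there is `C > 0` with `‖u‖²_{L^∞(ℰ)} ≤ C ‖u‖_{L²(ℰ)} ‖u‖_{H¹(ℰ)}` for all edgewise
continuously differentiable families `u`. -/
theorem stmt_2 (ι : Type*) [Fintype ι] [Nonempty ι] (a : ι → ℝ) (ha : ∀ e, 0 < a e) :
    ∃ C > (0:ℝ), ∀ (u u' : ι → ℝ → ℂ),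
      (∀ e, ∀ x ∈ Set.Icc (0:ℝ) (a e), HasDerivWithinAt (u e) (u' e x) (Set.Icc (0:ℝ) (a e)) x) →
      (∀ e, ContinuousOn (u' e) (Set.Icc (0:ℝ) (a e))) →
      ∀ e, ∀ x ∈ Set.Icc (0:ℝ) (a e),
        ‖u e x‖ ^ 2 ≤ C * Real.sqrt (∑ e', ∫ s in (0:ℝ)..(a e'), ‖u e' s‖ ^ 2) *
          Real.sqrt (∑ e', ∫ s in (0:ℝ)..(a e'), (‖u e' s‖ ^ 2 + ‖u' e' s‖ ^ 2)) :=
  stmt_2_general ι a ha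
end

section
/- For every a > 0 there exists a constant C > 0 such that for every u : ℝ → ℂ continuously differentiable on [0,a]: |u(0)|² + |u(a)|² ≤ C · (∫₀^a |u(x)|² dx)^{1/2} · (∫₀^a (|u(x)|² + |u'(x)|²) dx)^{1/2}. -/
/-!
With the affine weight `φ x = (a + b - 2x)/(b - a)`, which equals `1` at `a`, `-1` at `b`, and
has `|φ| ≤ 1` on `[a, b]`, the fundamental theorem of calculus applied to `φ ‖u‖²` gives
`‖u a‖² + ‖u b‖² = ∫ (2/(b - a)) ‖u‖² - φ · 2⟪u, u'⟫`. Bounding `|⟪u, u'⟫| ≤ ‖u‖ ‖u'‖` and applying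
Cauchy–Schwarz yields `‖u a‖² + ‖u b‖² ≤ (2/(b - a)) ‖u‖₂² + 2 ‖u‖₂ ‖u'‖₂`, and both terms are
at most a multiple of `‖u‖₂ ‖u‖_{H¹}`.
-/

open Set MeasureTheory intervalIntegral

lemma integral_eq_sub_of_hasDerivWithinAt_Icc {E : Type*} [NormedAddCommGroup E]
    [NormedSpace ℝ E] [CompleteSpace E] {f f' : ℝ → E} {a b : ℝ} (hab : a ≤ b)
    (hf : ∀ x ∈ Icc a b, HasDerivWithinAt f (f' x) (Icc a b) x)
    (hf' : ContinuousOn f' (Icc a b)) :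
    ∫ x in a..b, f' x = f b - f a :=
  integral_eq_sub_of_hasDerivAt_of_le hab (fun x hx => (hf x hx).continuousWithinAt)
    (fun x hx => (hf x (Ioo_subset_Icc_self hx)).hasDerivAt (Icc_mem_nhds hx.1 hx.2))
    (hf'.intervalIntegrable_of_Icc hab)

section CauchySchwarz

variable {E : Type*} [NormedAddCommGroup E] {f g : ℝ → E} {a b : ℝ}

lemma memLp_two_restrict_Ioc_of_continuousOn (hab : a ≤ b) (hf : ContinuousOn f (Icc a b)) :
    MemLp f 2 (volume.restrict (Ioc a b)) := by
  refine (memLp_two_iff_integrable_sq_norm ?_).2 ?_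
  · exact (hf.aestronglyMeasurable measurableSet_Icc).mono_measure
      (Measure.restrict_mono Ioc_subset_Icc_self le_rfl)
  · exact ((hf.norm.pow 2).intervalIntegrable_of_Icc hab).1

lemma integral_norm_mul_norm_le_sqrt_mul_sqrt (hab : a ≤ b)
    (hf : ContinuousOn f (Icc a b)) (hg : ContinuousOn g (Icc a b)) :
    ∫ x in a..b, ‖f x‖ * ‖g x‖ ≤
      √(∫ x in a..b, ‖f x‖ ^ 2) * √(∫ x in a..b, ‖g x‖ ^ 2) := by
  have h2 : ENNReal.ofReal 2 = 2 := by norm_num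
  have := integral_mul_le_Lp_mul_Lq_of_nonneg Real.HolderConjugate.two_two
    (Filter.Eventually.of_forall fun x => norm_nonneg (f x))
    (Filter.Eventually.of_forall fun x => norm_nonneg (g x))
    (h2 ▸ (memLp_two_restrict_Ioc_of_continuousOn hab hf).norm)
    (h2 ▸ (memLp_two_restrict_Ioc_of_continuousOn hab hg).norm)
  simpa only [integral_of_le hab, Real.sqrt_eq_rpow, Real.rpow_two] using this

end CauchySchwarz

section Trace

variable {F : Type*} [NormedAddCommGroup F] [InnerProductSpace ℝ F] {u u' : ℝ → F} {a b : ℝ}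

lemma abs_add_sub_two_mul_div_sub_le_one {x : ℝ} (hx : x ∈ Icc a b) (hab : a < b) :
    |(a + b - 2 * x) / (b - a)| ≤ 1 := by
  rw [abs_div, abs_of_pos (sub_pos.2 hab), div_le_one (sub_pos.2 hab), abs_le]
  constructor <;> linarith [hx.1, hx.2]

lemma norm_sq_add_norm_sq_eq_integral (hab : a < b)
    (hu : ∀ x ∈ Icc a b, HasDerivWithinAt u (u' x) (Icc a b) x)
    (hu' : ContinuousOn u' (Icc a b)) :
    ‖u a‖ ^ 2 + ‖u b‖ ^ 2 = ∫ x in a..b,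
      (2 / (b - a) * ‖u x‖ ^ 2 - (a + b - 2 * x) / (b - a) * (2 * inner ℝ (u x) (u' x))) := by
  have hcont : ContinuousOn u (Icc a b) := fun x hx => (hu x hx).continuousWithinAt
  have hderiv : ∀ x ∈ Icc a b, HasDerivWithinAt (fun x => (a + b - 2 * x) / (b - a) * ‖u x‖ ^ 2)
      (-(2 / (b - a)) * ‖u x‖ ^ 2 + (a + b - 2 * x) / (b - a) * (2 * inner ℝ (u x) (u' x)))
      (Icc a b) x := by
    intro x hx
    have hφ : HasDerivWithinAt (fun x => (a + b - 2 * x) / (b - a)) (-(2 / (b - a)))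
        (Icc a b) x := by
      have h := (((hasDerivAt_id' x).const_mul 2).const_sub (a + b)).div_const (b - a)
      rw [mul_one, neg_div] at h
      exact h.hasDerivWithinAt
    exact hφ.mul (hu x hx).norm_sq
  have hFTC := integral_eq_sub_of_hasDerivWithinAt_Icc hab.le hderiv (by fun_prop)
  calc ‖u a‖ ^ 2 + ‖u b‖ ^ 2 = -∫ x in a..b, -(2 / (b - a)) * ‖u x‖ ^ 2 +
        (a + b - 2 * x) / (b - a) * (2 * inner ℝ (u x) (u' x)) := by
        rw [hFTC]
        field_simp [(sub_pos.2 hab).ne']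
        ring
    _ = _ := by
        rw [← intervalIntegral.integral_neg]
        congr 1 with x
        ring

lemma norm_sq_add_norm_sq_le_integral (hab : a < b)
    (hu : ∀ x ∈ Icc a b, HasDerivWithinAt u (u' x) (Icc a b) x)
    (hu' : ContinuousOn u' (Icc a b)) :
    ‖u a‖ ^ 2 + ‖u b‖ ^ 2 ≤
      2 / (b - a) * (∫ x in a..b, ‖u x‖ ^ 2) + 2 * ∫ x in a..b, ‖u x‖ * ‖u' x‖ := by
  have hcont : ContinuousOn u (Icc a b) := fun x hx => (hu x hx).continuousWithinAt
  rw [norm_sq_add_norm_sq_eq_integral hab hu hu', ← intervalIntegral.integral_const_mul,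
    ← intervalIntegral.integral_const_mul, ← intervalIntegral.integral_add]
  · refine integral_mono_on hab.le
      ((by fun_prop : ContinuousOn _ _).intervalIntegrable_of_Icc hab.le)
      ((by fun_prop : ContinuousOn _ _).intervalIntegrable_of_Icc hab.le) fun x hx => ?_
    have hweight : |(a + b - 2 * x) / (b - a) * inner ℝ (u x) (u' x)| ≤ ‖u x‖ * ‖u' x‖ := by
      rw [abs_mul]
      exact (mul_le_of_le_one_left (abs_nonneg _) (abs_add_sub_two_mul_div_sub_le_one hx hab)).trans
        (abs_real_inner_le_norm _ _)
    linarith [neg_abs_le ((a + b - 2 * x) / (b - a) * inner ℝ (u x) (u' x))]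
  all_goals exact (by fun_prop : ContinuousOn _ _).intervalIntegrable_of_Icc hab.le

end Trace

/-- For every `a > 0` there is `C > 0` such that for every `u : ℝ → ℂ`
continuously differentiable on `[0,a]`:
`|u(0)|² + |u(a)|² ≤ C · ‖u‖_{L²(0,a)} · ‖u‖_{H¹(0,a)}`. -/
theorem stmt_3 (a : ℝ) (ha : 0 < a) :
    ∃ C > (0:ℝ), ∀ (u u' : ℝ → ℂ),
      (∀ x ∈ Set.Icc (0:ℝ) a, HasDerivWithinAt u (u' x) (Set.Icc (0:ℝ) a) x) →
      ContinuousOn u' (Set.Icc (0:ℝ) a) →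
      ‖u 0‖ ^ 2 + ‖u a‖ ^ 2 ≤ C * Real.sqrt (∫ x in (0:ℝ)..a, ‖u x‖ ^ 2) *
        Real.sqrt (∫ x in (0:ℝ)..a, (‖u x‖ ^ 2 + ‖u' x‖ ^ 2)) := by
  refine ⟨2 / a + 2, by positivity, fun u u' hu hu' => ?_⟩
  have hcont : ContinuousOn u (Icc 0 a) := fun x hx => (hu x hx).continuousWithinAt
  have hboundary := norm_sq_add_norm_sq_le_integral ha hu hu'
  have hCS := integral_norm_mul_norm_le_sqrt_mul_sqrt ha.le hcont hu'
  rw [sub_zero] at hboundary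
  rw [intervalIntegral.integral_add
    ((by fun_prop : ContinuousOn (fun x => ‖u x‖ ^ 2) _).intervalIntegrable_of_Icc ha.le)
    ((by fun_prop : ContinuousOn (fun x => ‖u' x‖ ^ 2) _).intervalIntegrable_of_Icc ha.le)]
  set A := ∫ x in (0:ℝ)..a, ‖u x‖ ^ 2
  set B := ∫ x in (0:ℝ)..a, ‖u' x‖ ^ 2
  have hA : 0 ≤ A := intervalIntegral.integral_nonneg ha.le fun x _ => sq_nonneg _
  have hB : 0 ≤ B := intervalIntegral.integral_nonneg ha.le fun x _ => sq_nonneg _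
  calc ‖u 0‖ ^ 2 + ‖u a‖ ^ 2 ≤ 2 / a * (√A * √A) + 2 * (√A * √B) := by
        rw [Real.mul_self_sqrt hA]; linarith
    _ ≤ 2 / a * (√A * √(A + B)) + 2 * (√A * √(A + B)) := by
        gcongr <;> linarith
    _ = (2 / a + 2) * √A * √(A + B) := by ring
end

section
/- Let n ∈ ℕ and let P be an n×n complex matrix with P² = P and Pᴴ = P (an orthogonal projection), let P⊥ = I − P, and let L be an n×n complex matrix with L·P = 0 and P·L = 0. Then the orthogonal complement in ℂⁿ×ℂⁿ (with the standard Hermitian inner product) of the subspace {(x,y) : −P⊥x + (L+P)y = 0} equals the subspace {(x,y) : (Lᴴ+P)x + P⊥y = 0}. -/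
/-! Applying `P` and `1 - P` to the defining equation shows that the subspace
`{(x, y) : -(1 - P) x + (L + P) y = 0}` is the range of the block matrix `T = [[P, L], [0, 1 - P]]`.
Hence its orthogonal complement is `ker Tᴴ = {(x, y) : P x = 0, Lᴴ x + (1 - P) y = 0}`, and since
`P Lᴴ = 0`, applying `P` to `(Lᴴ + P) x + (1 - P) y = 0` shows that this is the second subspace. -/

open Matrix

section Adjoint

variable {l m n o R : Type*} [Fintype l] [Fintype m] [Fintype n] [Fintype o]
  [CommRing R] [StarRing R]

lemma Matrix.dotProduct_star_mulVec (M : Matrix m n R) (x : m → R) (y : n → R) :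
    x ⬝ᵥ star (M *ᵥ y) = (Mᴴ *ᵥ x) ⬝ᵥ star y := by
  rw [star_mulVec, dotProduct_comm, ← dotProduct_mulVec, dotProduct_comm]

lemma Matrix.forall_dotProduct_star_eq_zero_iff {x : m → R} :
    (∀ u, x ⬝ᵥ star u = 0) ↔ x = 0 := by
  rw [← dotProduct_eq_zero_iff]
  exact ⟨fun h w => by simpa using h (star w), fun h u => h (star u)⟩

lemma Matrix.forall_dotProduct_star_blockMulVec_eq_zero_iff (A : Matrix m l R)
    (B : Matrix m o R) (C : Matrix n l R) (D : Matrix n o R) (x : m → R) (y : n → R) :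
    (∀ u v, x ⬝ᵥ star (A *ᵥ u + B *ᵥ v) + y ⬝ᵥ star (C *ᵥ u + D *ᵥ v) = 0) ↔
      Aᴴ *ᵥ x + Cᴴ *ᵥ y = 0 ∧ Bᴴ *ᵥ x + Dᴴ *ᵥ y = 0 := by
  have expand : ∀ u v, x ⬝ᵥ star (A *ᵥ u + B *ᵥ v) + y ⬝ᵥ star (C *ᵥ u + D *ᵥ v) =
      (Aᴴ *ᵥ x + Cᴴ *ᵥ y) ⬝ᵥ star u + (Bᴴ *ᵥ x + Dᴴ *ᵥ y) ⬝ᵥ star v := by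
    intro u v
    simp only [star_add, dotProduct_add, add_dotProduct, dotProduct_star_mulVec]
    abel
  simp only [expand]
  refine ⟨fun h => ⟨?_, ?_⟩, fun ⟨h₁, h₂⟩ u v => by simp [h₁, h₂]⟩
  · exact forall_dotProduct_star_eq_zero_iff.1 fun u => by simpa using h u 0
  · exact forall_dotProduct_star_eq_zero_iff.1 fun v => by simpa using h 0 v

end Adjoint

section Projection

variable {n R : Type*} [Fintype n] [DecidableEq n] [Ring R]

lemma neg_mulVec_add_mulVec_eq_zero_iff_exists {P L : Matrix n n R} (hP2 : P * P = P)
    (hLP : L * P = 0) (hPL : P * L = 0) (x y : n → R) :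
    -((1 - P) *ᵥ x) + (L + P) *ᵥ y = 0 ↔ ∃ u v, P *ᵥ u + L *ᵥ v = x ∧ (1 - P) *ᵥ v = y := by
  have hcompl_P : (1 - P) * P = 0 := by noncomm_ring [hP2]
  have hcompl_L : (1 - P) * L = L := by noncomm_ring [hPL]
  constructor
  · intro h
    have hPy : P *ᵥ y = 0 := by
      have := congrArg (P *ᵥ ·) h
      simp only [mulVec_add, mulVec_neg, mulVec_mulVec, mulVec_zero] at this
      rwa [show P * (1 - P) = 0 by noncomm_ring [hP2], show P * (L + P) = P by
        noncomm_ring [hPL, hP2], zero_mulVec, neg_zero, zero_add] at this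
    have hx : (1 - P) *ᵥ x = L *ᵥ y := by
      have := congrArg ((1 - P) *ᵥ ·) h
      simp only [mulVec_add, mulVec_neg, mulVec_mulVec, mulVec_zero] at this
      rw [show (1 - P) * (1 - P) = 1 - P by noncomm_ring [hP2], show (1 - P) * (L + P) = L by
        noncomm_ring [hPL, hP2, hcompl_P]] at this
      exact neg_add_eq_zero.1 this
    refine ⟨x, y, ?_, ?_⟩
    · rw [← hx, sub_mulVec, one_mulVec]
      abel
    · rw [sub_mulVec, one_mulVec, hPy, sub_zero]
  · rintro ⟨u, v, rfl, rfl⟩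
    simp only [mulVec_add, mulVec_mulVec, hcompl_P, hcompl_L, zero_mulVec, zero_add]
    rw [show (L + P) * (1 - P) = L by noncomm_ring [hLP, hP2], neg_add_cancel]

lemma add_mulVec_add_one_sub_mulVec_eq_zero_iff {P K : Matrix n n R} (hP2 : P * P = P)
    (hPK : P * K = 0) (x y : n → R) :
    (K + P) *ᵥ x + (1 - P) *ᵥ y = 0 ↔ P *ᵥ x = 0 ∧ K *ᵥ x + (1 - P) *ᵥ y = 0 := by
  constructor
  · intro h
    have hPx : P *ᵥ x = 0 := by
      have := congrArg (P *ᵥ ·) h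
      simp only [mulVec_add, mulVec_mulVec, mulVec_zero] at this
      rwa [show P * (K + P) = P by noncomm_ring [hPK, hP2], show P * (1 - P) = 0 by
        noncomm_ring [hP2], zero_mulVec, add_zero] at this
    rw [add_mulVec, hPx, add_zero] at h
    exact ⟨hPx, h⟩
  · rintro ⟨hPx, h⟩
    rw [add_mulVec, hPx, add_zero, h]

end Projection

/-- for an orthogonal projection `P` and `L` acting in `Ker P`, the
orthogonal complement in `ℂⁿ×ℂⁿ` (standard Hermitian inner product, conjugate-linear
in the second argument) of `{(x,y) : −P⊥x + (L+P)y = 0}` is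
`{(x,y) : (Lᴴ+P)x + P⊥y = 0}`. -/
theorem stmt_7 (n : ℕ) (P L : Matrix (Fin n) (Fin n) ℂ)
    (hP2 : P * P = P) (hPH : Pᴴ = P) (hLP : L * P = 0) (hPL : P * L = 0) :
    {p : (Fin n → ℂ) × (Fin n → ℂ) |
        ∀ q : (Fin n → ℂ) × (Fin n → ℂ),
          -((1 - P).mulVec q.1) + (L + P).mulVec q.2 = 0 →
          ((∑ i, p.1 i * (starRingEnd ℂ) (q.1 i)) +
            ∑ i, p.2 i * (starRingEnd ℂ) (q.2 i)) = 0} =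
      {p : (Fin n → ℂ) × (Fin n → ℂ) |
        (Lᴴ + P).mulVec p.1 + (1 - P).mulVec p.2 = 0} := by
  have hPLH : P * Lᴴ = 0 := by simpa [hPH] using congrArg conjTranspose hLP
  have hkernel := neg_mulVec_add_mulVec_eq_zero_iff_exists hP2 hLP hPL
  ext ⟨x, y⟩
  have hcompl := forall_dotProduct_star_blockMulVec_eq_zero_iff P L 0 (1 - P) x y
  simp only [zero_mulVec, zero_add, conjTranspose_zero, add_zero, conjTranspose_sub,
    conjTranspose_one, hPH] at hcompl
  change (∀ q : (Fin n → ℂ) × (Fin n → ℂ), -((1 - P) *ᵥ q.1) + (L + P) *ᵥ q.2 = 0 →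
      x ⬝ᵥ star q.1 + y ⬝ᵥ star q.2 = 0) ↔ _
  rw [Set.mem_ofPred_eq, add_mulVec_add_one_sub_mulVec_eq_zero_iff hP2 hPLH, ← hcompl]
  constructor
  · exact fun h u v => h (P *ᵥ u + L *ᵥ v, (1 - P) *ᵥ v) ((hkernel _ _).2 ⟨u, v, rfl, rfl⟩)
  · rintro h ⟨_, _⟩ hq
    obtain ⟨u, v, rfl, rfl⟩ := (hkernel _ _).1 hq
    exact h u v
end

section
/- For all real a > 0 and b > 0, the set { k ∈ ℝ : k > 0 and sin(k a)·(1 − exp(k² b)) + k·cos(k a)·(1 + exp(k² b)) = 0 } is unbounded above. In particular, the secular equation det Z_{P,L}(k) = 0 has a sequence of real solutions k_n → ∞, so the corresponding operator has a sequence of real eigenvalues −k_n² tending to −∞. -/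
/-!
At the points `k = mπ/a` the sine vanishes and the cosine is `(-1)^m`, so the secular function
equals `(-1)^m k (1 + e^{k²b})`: it changes sign between consecutive such points, and the
intermediate value theorem gives a zero in every interval `[mπ/a, (m+1)π/a]`.
-/

open Real Set

section SinCosCombination

variable {a : ℝ} {g h : ℝ → ℝ}

lemma sin_mul_add_cos_mul_at_nat_mul_pi_div (ha : a ≠ 0) (m : ℕ) :
    sin (m * π / a * a) * g (m * π / a) + cos (m * π / a * a) * h (m * π / a) =
      (-1) ^ m * h (m * π / a) := by
  rw [div_mul_cancel₀ _ ha, sin_nat_mul_pi, cos_nat_mul_pi]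
  ring

lemma exists_sin_mul_add_cos_mul_eq_zero_mem_Icc (ha : 0 < a) (hg : Continuous g)
    (hh : Continuous h) (hpos : ∀ k, 0 < k → 0 < h k) {m : ℕ} (hm : 0 < m) :
    ∃ k ∈ Icc (m * π / a) ((m + 1) * π / a), sin (k * a) * g k + cos (k * a) * h k = 0 := by
  set F : ℝ → ℝ := fun k => sin (k * a) * g k + cos (k * a) * h k
  have hF : ContinuousOn F (Icc (m * π / a) ((m + 1) * π / a)) := by fun_prop
  have hle : m * π / a ≤ (m + 1) * π / a := by gcongr; linarith
  have hleft : F (m * π / a) = (-1) ^ m * h (m * π / a) :=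
    sin_mul_add_cos_mul_at_nat_mul_pi_div ha.ne' m
  have hright : F ((m + 1) * π / a) = -((-1) ^ m * h ((m + 1) * π / a)) := by
    have hvalue := sin_mul_add_cos_mul_at_nat_mul_pi_div (g := g) (h := h) ha.ne' (m + 1)
    push_cast at hvalue
    simp only [F, hvalue, pow_succ]
    ring
  have hm' : (0 : ℝ) < m := Nat.cast_pos.mpr hm
  have hhl := hpos (m * π / a) (by positivity)
  have hhr := hpos ((m + 1) * π / a) (by positivity)
  rcases neg_one_pow_eq_or ℝ m with hsign | hsign <;> rw [hsign] at hleft hright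
  · exact intermediate_value_Icc' hle hF ⟨by linarith, by linarith⟩
  · exact intermediate_value_Icc hle hF ⟨by linarith, by linarith⟩

lemma not_bddAbove_pos_zeros_sin_mul_add_cos_mul (ha : 0 < a) (hg : Continuous g)
    (hh : Continuous h) (hpos : ∀ k, 0 < k → 0 < h k) :
    ¬ BddAbove {k : ℝ | 0 < k ∧ sin (k * a) * g k + cos (k * a) * h k = 0} := by
  rw [not_bddAbove_iff]
  intro M
  obtain ⟨n, hn⟩ := exists_nat_gt (M * a / π)
  obtain ⟨k, ⟨hk_ge, -⟩, hk⟩ :=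
    exists_sin_mul_add_cos_mul_eq_zero_mem_Icc ha hg hh hpos n.succ_pos
  have hM : M < (n + 1 : ℕ) * π / a := by
    rw [lt_div_iff₀ ha]
    rw [div_lt_iff₀ pi_pos] at hn
    push_cast
    nlinarith [pi_pos]
  have hk_pos : 0 < k := lt_of_lt_of_le (by positivity) hk_ge
  exact ⟨k, ⟨hk_pos, hk⟩, hM.trans_le hk_ge⟩

end SinCosCombination

theorem stmt_14_general (a b : ℝ) (ha : 0 < a) :
    ¬ BddAbove {k : ℝ | 0 < k ∧
      Real.sin (k * a) * (1 - Real.exp (k ^ 2 * b)) +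
        k * Real.cos (k * a) * (1 + Real.exp (k ^ 2 * b)) = 0} := by
  have key := not_bddAbove_pos_zeros_sin_mul_add_cos_mul ha
    (g := fun k => 1 - exp (k ^ 2 * b)) (h := fun k => k * (1 + exp (k ^ 2 * b)))
    (by fun_prop) (by fun_prop) (fun k hk => by positivity)
  convert key using 6 with k
  ring

/-- for all `a, b > 0`, the set of positive real solutions `k` of the secular
equation `sin(ka)(1 − e^{k²b}) + k cos(ka)(1 + e^{k²b}) = 0` is unbounded above; hence the
corresponding operator has a sequence of real eigenvalues `−k_n²` tending to `−∞`. -/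
theorem stmt_14 (a b : ℝ) (ha : 0 < a) (hb : 0 < b) :
    ¬ BddAbove {k : ℝ | 0 < k ∧
      Real.sin (k * a) * (1 - Real.exp (k ^ 2 * b)) +
        k * Real.cos (k * a) * (1 + Real.exp (k ^ 2 * b)) = 0} :=
  stmt_14_general a b ha
end
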